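/- Let V be a finite-dimensional real vector space and let N ⊆ V be a closed convex cone. Then a linear functional f lies in the relative interior of the dual cone N^∨ if and only if f(γ) > 0 for every γ ∈ N with −γ ∉ N, and f(γ) = 0 for every γ ∈ N with −γ ∈ N. -/
import Mathlib

open Filter Metric Set

section Stmt3Aux

variable {V : Type*} [NormedAddCommGroup V] [NormedSpace ℝ V]

/-- The lineality space of a closed convex cone, as a submodule. -/
def stmt3Lineality (N : Set V)
    (hadd : ∀ a ∈ N, ∀ b ∈ N, a + b ∈ N)
    (hCone : ∀ v ∈ N, ∀ r : ℝ, 0 < r → r • v ∈ N) (h0N : (0:V) ∈ N) :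
    Submodule ℝ V where
  carrier := {v | v ∈ N ∧ -v ∈ N}
  zero_mem' := by simpa using h0N
  add_mem' := by
    rintro a b ⟨ha, ha'⟩ ⟨hb, hb'⟩
    refine ⟨hadd a ha b hb, ?_⟩
    have h1 := hadd _ ha' _ hb'
    have h2 : -(a + b) = -a + -b := by abel
    rwa [h2]
  smul_mem' := by
    rintro r v ⟨hv, hv'⟩
    rcases lt_trichotomy r 0 with hr | hr | hr
    · have h1 : r • v = (-r) • (-v) := by simp
      have h2 : -(r • v) = (-r) • v := by simp
      exact ⟨by rw [h1]; exact hCone _ hv' _ (by linarith),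
        by rw [h2]; exact hCone _ hv _ (by linarith)⟩
    · subst hr; simpa using h0N
    · refine ⟨hCone _ hv _ hr, ?_⟩
      have h3 : -(r • v) = r • (-v) := by simp
      rw [h3]; exact hCone _ hv' _ hr

@[simp] lemma mem_stmt3Lineality {N : Set V}
    {hadd : ∀ a ∈ N, ∀ b ∈ N, a + b ∈ N}
    {hCone : ∀ v ∈ N, ∀ r : ℝ, 0 < r → r • v ∈ N} {h0N : (0:V) ∈ N} {v : V} :
    v ∈ stmt3Lineality N hadd hCone h0N ↔ v ∈ N ∧ -v ∈ N := Iff.rfl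

/-- The annihilator of a set, inside the continuous dual. -/
noncomputable def stmt3Ann (S : Set V) : Submodule ℝ (V →L[ℝ] ℝ) where
  carrier := {g | ∀ v ∈ S, g v = 0}
  zero_mem' := by intro v _; simp
  add_mem' := by intro a b ha hb v hv; simp [ha v hv, hb v hv]
  smul_mem' := by intro r a ha v hv; simp [ha v hv]

@[simp] lemma mem_stmt3Ann {S : Set V} {g : V →L[ℝ] ℝ} :
    g ∈ stmt3Ann S ↔ ∀ v ∈ S, g v = 0 := Iff.rfl

end Stmt3Aux

set_option maxHeartbeats 2000000

/-- A functional lies in the relative interior of the dual cone N^∨ iff it is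
strictly positive on N outside the lineality space and vanishes on the lineality
space of N. -/
theorem stmt3 {V : Type*} [NormedAddCommGroup V] [NormedSpace ℝ V]
    [FiniteDimensional ℝ V] (N : Set V) (hConv : Convex ℝ N)
    (hCone : ∀ v ∈ N, ∀ r : ℝ, 0 < r → r • v ∈ N) (hcl : IsClosed N)
    (f : V →L[ℝ] ℝ) :
    f ∈ intrinsicInterior ℝ {g : V →L[ℝ] ℝ | ∀ γ ∈ N, 0 ≤ g γ} ↔
      (∀ γ ∈ N, -γ ∉ N → 0 < f γ) ∧ (∀ γ ∈ N, -γ ∈ N → f γ = 0) := by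
  classical
  set D : Set (V →L[ℝ] ℝ) := {g : V →L[ℝ] ℝ | ∀ γ ∈ N, 0 ≤ g γ} with hDdef
  have hadd : ∀ a ∈ N, ∀ b ∈ N, a + b ∈ N := by
    intro a ha b hb
    have hmid : (1/2 : ℝ) • a + (1/2 : ℝ) • b ∈ N :=
      hConv ha hb (by norm_num) (by norm_num) (by norm_num)
    have h1 := hCone _ hmid 2 (by norm_num)
    have heq : (2:ℝ) • ((1/2 : ℝ) • a + (1/2 : ℝ) • b) = a + b := by
      rw [smul_add, smul_smul, smul_smul]; norm_num
    rwa [heq] at h1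
  have h0D : (0 : V →L[ℝ] ℝ) ∈ D := by intro γ _; simp
  constructor
  · intro hf
    have hfD : f ∈ D := intrinsicInterior_subset hf
    have hvan : ∀ γ ∈ N, -γ ∈ N → f γ = 0 := by
      intro γ hγ hγ'
      have h1 := hfD γ hγ
      have h2 := hfD _ hγ'
      simp only [map_neg] at h2
      linarith
    refine ⟨?_, hvan⟩
    intro γ hγ hγ'
    rcases (hfD γ hγ).lt_or_eq with hlt | heq0
    · exact hlt
    exfalso
    have h0N : (0:V) ∈ N := by
      have htend : Filter.Tendsto (fun n : ℕ => (1/((n:ℝ)+1)) • γ)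
          Filter.atTop (nhds 0) := by
        have h1 : Filter.Tendsto (fun n : ℕ => (1/((n:ℝ)+1))) Filter.atTop (nhds 0) :=
          tendsto_one_div_add_atTop_nhds_zero_nat
        simpa using h1.smul_const γ
      exact hcl.mem_of_tendsto htend
        (Filter.Eventually.of_forall fun n => hCone γ hγ _ (by positivity))
    obtain ⟨h, u, hu1, hu2⟩ := geometric_hahn_banach_closed_point hConv hcl hγ'
    have hu0 : 0 < u := by have := hu1 0 h0N; simpa using this
    have hneg : ∀ a ∈ N, h a ≤ 0 := by
      intro a ha
      by_contra hpos
      push_neg at hpos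
      have hr : (u / h a + 1) • a ∈ N := hCone a ha _ (by positivity)
      have h3 := hu1 _ hr
      rw [map_smul] at h3
      have h4 : (u / h a + 1) * h a = u + h a := by field_simp
      simp only [smul_eq_mul] at h3
      nlinarith
    have hh'D : -h ∈ D := by intro a ha; simpa using hneg a ha
    have hh'γ : 0 < -(h γ) := by
      have h5 : h (-γ) = -(h γ) := by simp
      rw [h5] at hu2
      linarith
    obtain ⟨y, hy, hyf⟩ := mem_intrinsicInterior.mp hf
    rw [mem_interior_iff_mem_nhds, nhds_subtype_eq_comap, Filter.mem_comap] at hy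
    obtain ⟨t, ht, hts⟩ := hy
    rw [hyf] at ht
    obtain ⟨ε, hε, hball⟩ := Metric.mem_nhds_iff.mp ht
    set t0 : ℝ := ε / (2 * (‖h‖ + 1)) with ht0def
    have ht0 : 0 < t0 := by positivity
    have hmem : f - t0 • (-h) ∈ affineSpan ℝ D := by
      have h4 := AffineSubspace.smul_vsub_vadd_mem (affineSpan ℝ D) t0
        (subset_affineSpan ℝ D h0D) (subset_affineSpan ℝ D hh'D)
        (subset_affineSpan ℝ D hfD)
      have heq : t0 • ((0 : V →L[ℝ] ℝ) -ᵥ (-h)) +ᵥ f = f - t0 • (-h) := by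
        simp only [vsub_eq_sub, vadd_eq_add, zero_sub, neg_neg, smul_neg]
        abel
      rwa [heq] at h4
    have hzD : f - t0 • (-h) ∈ D := by
      have hb : f - t0 • (-h) ∈ Metric.ball f ε := by
        rw [Metric.mem_ball, dist_eq_norm]
        have h6 : f - t0 • (-h) - f = -(t0 • (-h)) := by abel
        rw [h6, norm_neg]
        have h7 : ‖t0 • (-h)‖ = ‖t0‖ * ‖(-h)‖ := norm_smul t0 (-h)
        rw [Real.norm_eq_abs, abs_of_pos ht0, norm_neg] at h7
        rw [h7, ht0def]
        rw [div_mul_eq_mul_div, div_lt_iff₀ (by positivity)]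
        nlinarith [mul_nonneg hε.le (norm_nonneg h)]
      exact hts (show (⟨f - t0 • (-h), hmem⟩ : affineSpan ℝ D) ∈ _ from hball hb)
    have h5 := hzD γ hγ
    simp only [ContinuousLinearMap.sub_apply, ContinuousLinearMap.smul_apply,
      ContinuousLinearMap.neg_apply, smul_eq_mul] at h5
    nlinarith [mul_pos ht0 hh'γ]
  · rintro ⟨hpos, hvan⟩
    have hfD : f ∈ D := by
      intro γ hγ
      by_cases hn : -γ ∈ N
      · exact (hvan γ hγ hn).ge
      · exact (hpos γ hγ hn).le
    rcases N.eq_empty_or_nonempty with hNe | ⟨v0, hv0⟩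
    · refine mem_intrinsicInterior.mpr ⟨⟨f, subset_affineSpan ℝ D hfD⟩, ?_, rfl⟩
      have huniv : ((↑) ⁻¹' D : Set (affineSpan ℝ D)) = Set.univ := by
        ext g; simp [hDdef, hNe]
      rw [huniv, interior_univ]
      trivial
    · have h0N : (0:V) ∈ N := by
        have htend : Filter.Tendsto (fun n : ℕ => (1/((n:ℝ)+1)) • v0)
            Filter.atTop (nhds 0) := by
          have h1 : Filter.Tendsto (fun n : ℕ => (1/((n:ℝ)+1))) Filter.atTop (nhds 0) :=
            tendsto_one_div_add_atTop_nhds_zero_nat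
          simpa using h1.smul_const v0
        exact hcl.mem_of_tendsto htend
          (Filter.Eventually.of_forall fun n => hCone v0 hv0 _ (by positivity))
      obtain ⟨M, hM⟩ := Submodule.exists_isCompl (stmt3Lineality N hadd hCone h0N)
      have hDA : D ⊆ (stmt3Ann {v : V | v ∈ N ∧ -v ∈ N} : Set (V →L[ℝ] ℝ)) := by
        intro g hg v hv
        have h1 := hg v hv.1
        have h2 := hg _ hv.2
        simp only [map_neg] at h2
        linarith
      have hdecomp : ∀ γ ∈ N, ∃ l, (l ∈ N ∧ -l ∈ N) ∧ ∃ m ∈ M, m ∈ N ∧ γ = l + m := by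
        intro γ hγ
        have hγtop : γ ∈ stmt3Lineality N hadd hCone h0N ⊔ M := by
          rw [hM.sup_eq_top]; trivial
        obtain ⟨l, hl, m, hm, hlm⟩ := Submodule.mem_sup.mp hγtop
        rw [mem_stmt3Lineality] at hl
        refine ⟨l, hl, m, hm, ?_, hlm.symm⟩
        have h1 : γ + (-l) ∈ N := hadd γ hγ _ hl.2
        have heq : γ + (-l) = m := by rw [← hlm]; abel
        rwa [heq] at h1
      set K : Set V := {m : V | m ∈ M ∧ m ∈ N ∧ ‖m‖ = 1} with hKdef
      obtain ⟨c, hc0, hcK⟩ : ∃ c : ℝ, 0 < c ∧ ∀ m ∈ K, c ≤ f m := by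
        rcases K.eq_empty_or_nonempty with hKe | hKne
        · exact ⟨1, one_pos, by simp [hKe]⟩
        · have hKcl : IsClosed K := by
            have h1 : IsClosed (M : Set V) := M.closed_of_finiteDimensional
            have h2 : IsClosed {m : V | ‖m‖ = 1} :=
              isClosed_eq continuous_norm continuous_const
            have heqK : K = (M : Set V) ∩ (N ∩ {m : V | ‖m‖ = 1}) := by
              ext m
              simp [hKdef, Set.mem_inter_iff, and_assoc]
            rw [heqK]
            exact h1.inter (hcl.inter h2)
          have hKb : Bornology.IsBounded K :=
            (Metric.isBounded_closedBall (x := (0:V)) (r := 1)).subset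
              (fun m hm => by
                simp only [Metric.mem_closedBall, dist_zero_right]
                exact le_of_eq hm.2.2)
          have hKcomp : IsCompact K := Metric.isCompact_of_isClosed_isBounded hKcl hKb
          obtain ⟨m0, hm0K, hm0min⟩ :=
            hKcomp.exists_isMinOn hKne f.continuous.continuousOn
          refine ⟨f m0, ?_, fun m hm => hm0min hm⟩
          refine hpos m0 hm0K.2.1 fun hneg => ?_
          have hmem : m0 ∈ stmt3Lineality N hadd hCone h0N ⊓ M :=
            ⟨⟨hm0K.2.1, hneg⟩, hm0K.1⟩
          rw [disjoint_iff.mp hM.disjoint] at hmem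
          have h00 : m0 = 0 := by simpa using hmem
          have hn1 := hm0K.2.2
          rw [h00, norm_zero] at hn1
          exact absurd hn1 (by norm_num)
      refine mem_intrinsicInterior.mpr ⟨⟨f, subset_affineSpan ℝ D hfD⟩, ?_, rfl⟩
      have hopen : IsOpen ((↑) ⁻¹' Metric.ball f c : Set (affineSpan ℝ D)) :=
        continuous_subtype_val.isOpen_preimage _ Metric.isOpen_ball
      refine interior_maximal ?_ hopen (by simp [Set.mem_preimage, Metric.mem_ball, hc0])
      rintro ⟨g, hg⟩ hgball
      have hgA : g ∈ stmt3Ann {v : V | v ∈ N ∧ -v ∈ N} := by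
        have hle : affineSpan ℝ D ≤
            (stmt3Ann {v : V | v ∈ N ∧ -v ∈ N}).toAffineSubspace := by
          rw [affineSpan_le]
          intro x hx
          exact hDA hx
        exact (Submodule.mem_toAffineSubspace).mp (hle hg)
      have hgf : ‖g - f‖ < c := by
        have h1 : g ∈ Metric.ball f c := hgball
        rwa [Metric.mem_ball, dist_eq_norm] at h1
      intro γ hγ
      obtain ⟨l, hl, m, hmM, hmN, rfl⟩ := hdecomp γ hγ
      have hgl : g l = 0 := hgA l hl
      have hglm : g (l + m) = g m := by rw [map_add, hgl, zero_add]
      rw [hglm]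
      rcases eq_or_ne m 0 with rfl | hm0
      · simp
      · set u : V := ‖m‖⁻¹ • m with hudef
        have hmnorm : (0:ℝ) < ‖m‖ := norm_pos_iff.mpr hm0
        have huK : u ∈ K := by
          refine ⟨M.smul_mem _ hmM, hCone _ hmN _ (by positivity), ?_⟩
          rw [hudef, norm_smul, Real.norm_eq_abs, abs_of_pos (by positivity)]
          field_simp
        have hfu : c ≤ f u := hcK u huK
        have hgu : 0 < g u := by
          have hbound : |g u - f u| ≤ ‖g - f‖ := by
            have h1 : g u - f u = (g - f) u := by simp
            rw [h1]
            calc |(g - f) u| = ‖(g - f) u‖ := (Real.norm_eq_abs _).symm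
              _ ≤ ‖g - f‖ * ‖u‖ := (g - f).le_opNorm u
              _ = ‖g - f‖ := by rw [huK.2.2, mul_one]
          have h2 := abs_le.mp hbound
          linarith [h2.1, h2.2]
        have hmu : m = ‖m‖ • u := by
          rw [hudef, smul_smul, mul_inv_cancel₀ (ne_of_gt hmnorm), one_smul]
        rw [hmu, map_smul, smul_eq_mul]
        positivity
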